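/- If a rooted directed graph (Γ, v) has the unique simple path property and is quasilinear (its strong components are totally ordered in the accessibility order), then Γ is linear, i.e., its transition edges form a chain. -/

import Mathlib

structure DGraph : Type 1 where
  V : Type
  E : Type
  ι : E → V
  τ : E → V

namespace DGraph

/-- A directed path from `u` to `w` given by its list of edges. -/
inductive Path (G : DGraph) : G.V → G.V → List G.E → Prop
  | nil (v : G.V) : Path G v v []
  | cons (e : G.E) {w : G.V} {p : List G.E} :
      Path G (G.τ e) w p → Path G (G.ι e) w (e :: p)

/-- The list of vertices visited by a path `p` starting at `u`. -/
def verts (G : DGraph) (u : G.V) (p : List G.E) : List G.V :=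
  u :: p.map G.τ

/-- A simple directed path: a path visiting no vertex twice. -/
def SimplePath (G : DGraph) (u w : G.V) (p : List G.E) : Prop :=
  G.Path u w p ∧ (G.verts u p).Nodup

/-- `w` is reachable from `u` by a directed path. -/
def Reach (G : DGraph) (u w : G.V) : Prop := ∃ p, G.Path u w p

/-- A graph is rooted at `v` if every vertex is reachable from `v`. -/
def Rooted (G : DGraph) (v : G.V) : Prop := ∀ w, G.Reach v w

end DGraph


namespace DGraph

/-- A transition edge: an edge between distinct strong components, i.e. one
whose initial vertex is not reachable from its terminal vertex. -/
def Transition (G : DGraph) (e : G.E) : Prop := ¬ G.Reach (G.τ e) (G.ι e)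

/-!
By uniqueness, the simple paths from the root are closed under prefixes, so they form a spanning
tree: every edge either points back to a vertex of the tree path to its source (and then lies in
a strong component) or is the last edge of the tree path to its target. Transition edges are
therefore tree edges. Walking along a path from `u` to `w`, each tree edge on the way to `w` is
either already on the tree path to `u` or has its source reachable from `u`. Applied to a path
between the targets of two transition edges, which exists by quasilinearity, this compares them.
-/

section Linear

variable {G : DGraph}

theorem Path.append : ∀ {u x w : G.V} {p q : List G.E},
    G.Path u x p → G.Path x w q → G.Path u w (p ++ q)
  | _, _, _, _, _, .nil _, hq => hq
  | _, _, _, _, _, .cons e hp, hq => .cons e (hp.append hq)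

theorem verts_append (u : G.V) (p q : List G.E) :
    G.verts u (p ++ q) = G.verts u p ++ q.map G.τ := by
  simp [verts]

theorem Path.exists_split_of_mem_verts : ∀ {u w : G.V} {p : List G.E}, G.Path u w p →
    ∀ {x : G.V}, x ∈ G.verts u p → ∃ p₁ p₂, p = p₁ ++ p₂ ∧ G.Path u x p₁ ∧ G.Path x w p₂
  | _, _, _, .nil _, x, hx => by
      obtain rfl : x = _ := by simpa [verts] using hx
      exact ⟨[], [], rfl, .nil _, .nil _⟩
  | _, _, _, .cons (p := p) e hp, x, hx => by
      rcases (by simpa [verts] using hx : x = G.ι e ∨ x ∈ G.verts (G.τ e) p) with rfl | hx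
      · exact ⟨[], e :: p, rfl, .nil _, .cons e hp⟩
      · obtain ⟨p₁, p₂, rfl, h₁, h₂⟩ := hp.exists_split_of_mem_verts hx
        exact ⟨e :: p₁, p₂, rfl, .cons e h₁, h₂⟩

theorem Path.reach_of_mem_verts {u w x : G.V} {p : List G.E} (hp : G.Path u w p)
    (hx : x ∈ G.verts u p) : G.Reach x w :=
  let ⟨_, p₂, _, _, h₂⟩ := hp.exists_split_of_mem_verts hx
  ⟨p₂, h₂⟩

theorem Path.reach_of_mem : ∀ {u w : G.V} {p : List G.E}, G.Path u w p →
    ∀ {g : G.E}, g ∈ p → G.Reach (G.τ g) w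
  | _, _, _, .nil _, _, hg => absurd hg List.not_mem_nil
  | _, _, _, .cons e hp, _, hg => by
      rcases List.mem_cons.mp hg with rfl | hg
      · exact ⟨_, hp⟩
      · exact hp.reach_of_mem hg

section UniqueSimplePaths

variable {v : G.V} {P : G.V → List G.E} (hP : ∀ w q, G.SimplePath v w q ↔ q = P w)
include hP

theorem simplePath_uspp (w : G.V) : G.SimplePath v w (P w) :=
  (hP w _).2 rfl

theorem uspp_prefix_of_mem_verts {u x : G.V} (hx : x ∈ G.verts v (P u)) : P x <+: P u := by
  obtain ⟨p₁, p₂, hsplit, h₁, -⟩ := (simplePath_uspp hP u).1.exists_split_of_mem_verts hx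
  have hnodup : (G.verts v p₁).Nodup := by
    have := (simplePath_uspp hP u).2
    rw [hsplit, verts_append] at this
    exact (List.nodup_append.mp this).1
  rw [hsplit, (hP x p₁).1 ⟨h₁, hnodup⟩]
  exact List.prefix_append _ _

theorem mem_verts_or_uspp_eq_append (h : G.E) :
    G.τ h ∈ G.verts v (P (G.ι h)) ∨ P (G.τ h) = P (G.ι h) ++ [h] := by
  refine or_iff_not_imp_left.2 fun hback => ((hP _ _).1 ⟨?_, ?_⟩).symm
  · exact (simplePath_uspp hP _).1.append (.cons h (.nil _))
  · rw [verts_append]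
    refine List.nodup_append'.2 ⟨(simplePath_uspp hP _).2, by simp, ?_⟩
    rintro a ha hτ
    obtain rfl : a = G.τ h := by simpa using hτ
    exact hback ha

theorem uspp_eq_append_of_transition {h : G.E} (ht : G.Transition h) :
    P (G.τ h) = P (G.ι h) ++ [h] :=
  (mem_verts_or_uspp_eq_append hP h).resolve_left
    fun hback => ht ((simplePath_uspp hP _).1.reach_of_mem_verts hback)

theorem mem_uspp_source_of_mem_uspp_target {g h : G.E} (hg : g ∈ P (G.τ h)) :
    g ∈ P (G.ι h) ∨ g = h := by
  rcases mem_verts_or_uspp_eq_append hP h with hback | htree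
  · exact Or.inl ((uspp_prefix_of_mem_verts hP hback).subset hg)
  · simpa [htree] using hg

theorem mem_uspp_or_reach_of_path {u w : G.V} {t : List G.E} (ht : G.Path u w t) {g : G.E}
    (hg : g ∈ P w) : g ∈ P u ∨ G.Reach u (G.ι g) := by
  induction ht with
  | nil => exact Or.inl hg
  | cons h _ ih =>
      rcases ih hg with hg | ⟨r, hr⟩
      · rcases mem_uspp_source_of_mem_uspp_target hP hg with hg | rfl
        · exact Or.inl hg
        · exact Or.inr ⟨[], .nil _⟩
      · exact Or.inr ⟨h :: r, .cons h hr⟩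

theorem transition_eq_or_reach_of_reach {e f : G.E} (he : G.Transition e) (hf : G.Transition f)
    (hef : G.Reach (G.τ e) (G.τ f)) :
    e = f ∨ G.Reach (G.τ e) (G.ι f) ∨ G.Reach (G.τ f) (G.ι e) := by
  obtain ⟨t, ht⟩ := hef
  have hf_mem : f ∈ P (G.τ f) := by simp [uspp_eq_append_of_transition hP hf]
  rcases mem_uspp_or_reach_of_path hP ht hf_mem with hf_mem | hreach
  · rw [uspp_eq_append_of_transition hP he, List.mem_append, List.mem_singleton] at hf_mem
    rcases hf_mem with hf_mem | rfl
    · exact Or.inr (Or.inr ((simplePath_uspp hP _).1.reach_of_mem hf_mem))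
    · exact Or.inl rfl
  · exact Or.inr (Or.inl hreach)

end UniqueSimplePaths

end Linear

theorem quasilinear_uspp_implies_linear_general (G : DGraph) (v : G.V)
    (huspp : ∀ w : G.V, ∃! p : List G.E, G.SimplePath v w p)
    (hquasi : ∀ u w : G.V, G.Reach u w ∨ G.Reach w u) :
    ∀ e f : G.E, G.Transition e → G.Transition f →
      e = f ∨ G.Reach (G.τ e) (G.ι f) ∨ G.Reach (G.τ f) (G.ι e) := by
  choose P hsimple hunique using huspp
  have hP : ∀ w q, G.SimplePath v w q ↔ q = P w :=
    fun w q => ⟨hunique w q, fun hq => hq ▸ hsimple w⟩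
  intro e f he hf
  rcases hquasi (G.τ e) (G.τ f) with hef | hfe
  · exact transition_eq_or_reach_of_reach hP he hf hef
  · rcases transition_eq_or_reach_of_reach hP hf he hfe with rfl | hfe | hef
    exacts [Or.inl rfl, Or.inr (Or.inr hfe), Or.inr (Or.inl hef)]

/-- If a rooted directed graph `(Γ, v)` has the unique simple path property
and is quasilinear (any two vertices are comparable in the accessibility
preorder, i.e. its strong components are totally ordered), then `Γ` is
linear: its transition edges form a chain. -/
theorem quasilinear_uspp_implies_linear (G : DGraph) (v : G.V)
    (hroot : G.Rooted v)
    (huspp : ∀ w : G.V, ∃! p : List G.E, G.SimplePath v w p)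
    (hquasi : ∀ u w : G.V, G.Reach u w ∨ G.Reach w u) :
    ∀ e f : G.E, G.Transition e → G.Transition f →
      e = f ∨ G.Reach (G.τ e) (G.ι f) ∨ G.Reach (G.τ f) (G.ι e) :=
  quasilinear_uspp_implies_linear_general G v huspp hquasi

end DGraph
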